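/- arXiv:2301.12489 — 2 statements merged into one kernel-verified Lean document; each statement's English description precedes it below -/
import Mathlib

section
/- If K₀ ∈ ℝ^{m×n} is a stabilizing feedback gain (i.e., A − BK₀ is Hurwitz), Q = Qᵀ ⪰ 0 with (A, √Q) observable, R = Rᵀ ≻ 0, and for each k ≥ 1 the matrix P_k = P_kᵀ ≻ 0 solves the Lyapunov equation P_k(A − BK_{k−1}) + (A − BK_{k−1})ᵀP_k + Q + K_{k−1}ᵀ R K_{k−1} = 0 with K_k = R⁻¹Bᵀ P_{k−1}, then A − BK_k is Hurwitz for every k. -/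
/-
An eigenpair `(μ, v)` of `M = A - B K_k` turns the Lyapunov equation solved by `P = P_{k+1} ≻ 0`
into `2 Re μ · v*Pv + |√Q v|² + (Kv)* R (Kv) = 0`, so `Re μ ≤ 0`, and `Re μ = 0` forces
`√Q v = 0` and `K_k v = 0`. Then `A v = μ v` with `√Q v = 0`, which the Hautus test excludes.
-/

open Matrix

noncomputable section

/-- A real square matrix is Hurwitz if all its (complex) eigenvalues have negative real part. -/
def Hurwitz {n : ℕ} (M : Matrix (Fin n) (Fin n) ℝ) : Prop :=
  ∀ μ ∈ spectrum ℂ (M.map Complex.ofReal), μ.re < 0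

/-- Observability of the pair (A, C) via the Hautus test. -/
def Observable {n p : ℕ} (A : Matrix (Fin n) (Fin n) ℝ) (C : Matrix (Fin p) (Fin n) ℝ) : Prop :=
  ∀ μ : ℂ, (Matrix.fromRows (A.map Complex.ofReal - μ • 1) (C.map Complex.ofReal)).rank = n

open scoped ComplexOrder

namespace Matrix

variable {ι κ : Type*}

theorem exists_mulVec_eq_smul_of_mem_spectrum {K : Type*} [Field K] [Fintype ι] [DecidableEq ι]
    {M : Matrix ι ι K} {μ : K} (hμ : μ ∈ spectrum K M) : ∃ v ≠ 0, M *ᵥ v = μ • v := by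
  rw [← spectrum_toLin', ← Module.End.hasEigenvalue_iff_mem_spectrum] at hμ
  obtain ⟨v, hv⟩ := hμ.exists_hasEigenvector
  exact ⟨v, hv.2, Module.End.mem_eigenspace_iff.1 hv.1⟩

theorem transpose_map_ofReal (M : Matrix κ ι ℝ) :
    Mᵀ.map Complex.ofReal = (M.map Complex.ofReal)ᴴ := by
  rw [← conjTranspose_eq_transpose_of_trivial,
    conjTranspose_map _ fun x => (Complex.conj_ofReal x).symm]

theorem map_ofReal_mul [Fintype κ] {l : Type*} (M : Matrix ι κ ℝ) (N : Matrix κ l ℝ) :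
    (M * N).map Complex.ofReal = M.map Complex.ofReal * N.map Complex.ofReal :=
  Matrix.map_mul (f := Complex.ofRealHom)

theorem PosDef.map_ofReal [Fintype ι] [DecidableEq ι] {P : Matrix ι ι ℝ} (hP : P.PosDef) :
    (P.map Complex.ofReal).PosDef := by
  obtain ⟨U, rfl⟩ : ∃ U, P = star U * U := by
    open scoped MatrixOrder in
    exact CStarAlgebra.nonneg_iff_eq_star_mul_self.mp hP.posSemidef.nonneg
  have hU : IsUnit (U.map Complex.ofReal) :=
    (isUnit_of_mul_isUnit_right hP.isUnit).map Complex.ofRealHom.mapMatrix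
  rw [star_eq_conjTranspose, conjTranspose_eq_transpose_of_trivial, map_ofReal_mul,
    transpose_map_ofReal]
  exact .conjTranspose_mul_self _ (mulVec_injective_iff_isUnit.2 hU)

theorem PosSemidef.mulVec_eq_zero_of_add [Fintype ι] {𝕜 : Type*} [RCLike 𝕜] {W₁ W₂ : Matrix ι ι 𝕜}
    (h₁ : W₁.PosSemidef) (h₂ : W₂.PosSemidef) {v : ι → 𝕜} (h : (W₁ + W₂) *ᵥ v = 0) :
    W₁ *ᵥ v = 0 ∧ W₂ *ᵥ v = 0 := by
  rw [← h₁.dotProduct_mulVec_zero_iff, ← h₂.dotProduct_mulVec_zero_iff]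
  rw [← (h₁.add h₂).dotProduct_mulVec_zero_iff, add_mulVec, dotProduct_add] at h
  exact (add_eq_zero_iff_of_nonneg (h₁.dotProduct_mulVec_nonneg v)
    (h₂.dotProduct_mulVec_nonneg v)).1 h

theorem PosDef.conjTranspose_mul_mul_same_mulVec_eq_zero [Fintype ι] {R : Type*} [CommRing R]
    [PartialOrder R] [StarRing R] [Fintype κ] {S : Matrix κ κ R} (hS : S.PosDef)
    (T : Matrix κ ι R) (v : ι → R) :
    (Tᴴ * S * T) *ᵥ v = 0 ↔ T *ᵥ v = 0 := by
  refine ⟨fun h => ?_, fun h => by rw [← mulVec_mulVec, h, mulVec_zero]⟩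
  by_contra hT
  have hquad : star (T *ᵥ v) ⬝ᵥ S *ᵥ (T *ᵥ v) = star v ⬝ᵥ (Tᴴ * S * T) *ᵥ v := by
    rw [← mulVec_mulVec, ← mulVec_mulVec, dotProduct_mulVec (star v), ← star_mulVec]
  exact (hS.dotProduct_mulVec_pos hT).ne' (by rw [hquad, h, dotProduct_zero])

theorem two_re_mul_add_eq_zero_of_lyapunov [Fintype ι] {M P W : Matrix ι ι ℂ}
    (hlyap : P * M + Mᴴ * P + W = 0) {μ : ℂ} {v : ι → ℂ} (hv : M *ᵥ v = μ • v) :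
    ((2 * μ.re : ℝ) : ℂ) * (star v ⬝ᵥ P *ᵥ v) + star v ⬝ᵥ W *ᵥ v = 0 := by
  have h := congrArg (fun X => star v ⬝ᵥ X *ᵥ v) hlyap
  simp only [add_mulVec, dotProduct_add, ← mulVec_mulVec, hv, mulVec_smul, dotProduct_smul,
    zero_mulVec, dotProduct_zero] at h
  rw [dotProduct_mulVec (star v) Mᴴ, ← star_mulVec, hv, star_smul, smul_dotProduct] at h
  rw [← h, ← Complex.add_conj]
  simp only [smul_eq_mul, RCLike.star_def]
  ring

theorem mulVec_eq_zero_of_lyapunov [Fintype ι] {M P W : Matrix ι ι ℂ} (hP : P.PosDef)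
    (hW : W.PosSemidef) (hlyap : P * M + Mᴴ * P + W = 0) {μ : ℂ} {v : ι → ℂ} (hv0 : v ≠ 0)
    (hv : M *ᵥ v = μ • v) (hμ : 0 ≤ μ.re) : W *ᵥ v = 0 := by
  rw [← hW.dotProduct_mulVec_zero_iff]
  obtain ⟨hp, hp_im⟩ := Complex.pos_iff.1 (hP.dotProduct_mulVec_pos hv0)
  obtain ⟨hw, hw_im⟩ := Complex.nonneg_iff.1 (hW.dotProduct_mulVec_nonneg v)
  have hre := congrArg Complex.re (two_re_mul_add_eq_zero_of_lyapunov hlyap hv)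
  simp only [Complex.add_re, Complex.re_ofReal_mul, Complex.zero_re] at hre
  have hw0 : (star v ⬝ᵥ W *ᵥ v).re = 0 := by
    nlinarith [mul_nonneg (mul_nonneg zero_le_two hμ) hp.le]
  exact Complex.ext hw0 hw_im.symm

theorem mulVec_injective_of_rank_eq_card [Fintype ι] {K : Type*} [Field K] [Fintype κ]
    {F : Matrix κ ι K} (h : F.rank = Fintype.card ι) : Function.Injective F.mulVec := by
  have hrn := LinearMap.finrank_range_add_finrank_ker F.mulVecLin
  rw [Module.finrank_fintype_fun_eq_card, ← rank, h, add_eq_left,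
    Submodule.finrank_eq_zero] at hrn
  exact LinearMap.ker_eq_bot.1 hrn

end Matrix

theorem Observable.eq_zero_of_mulVec_eq_smul {n p : ℕ} {A : Matrix (Fin n) (Fin n) ℝ}
    {C : Matrix (Fin p) (Fin n) ℝ} (hobs : Observable A C) {μ : ℂ} {v : Fin n → ℂ}
    (hA : A.map Complex.ofReal *ᵥ v = μ • v) (hC : C.map Complex.ofReal *ᵥ v = 0) : v = 0 := by
  have hF : fromRows (A.map Complex.ofReal - μ • 1) (C.map Complex.ofReal) *ᵥ v = 0 := by
    rw [fromRows_mulVec, sub_mulVec, hA, smul_mulVec, one_mulVec, sub_self, hC,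
      Sum.elim_zero_zero]
  exact mulVec_injective_of_rank_eq_card ((hobs μ).trans (Fintype.card_fin n).symm)
    (hF.trans (mulVec_zero _).symm)

theorem hurwitz_of_lyapunov {n m p : ℕ} {A : Matrix (Fin n) (Fin n) ℝ}
    {B : Matrix (Fin n) (Fin m) ℝ} {C : Matrix (Fin p) (Fin n) ℝ} {R : Matrix (Fin m) (Fin m) ℝ}
    {K : Matrix (Fin m) (Fin n) ℝ} {P : Matrix (Fin n) (Fin n) ℝ} (hobs : Observable A C)
    (hR : R.PosDef) (hP : P.PosDef)
    (hlyap : P * (A - B * K) + (A - B * K)ᵀ * P + Cᵀ * C + Kᵀ * R * K = 0) :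
    Hurwitz (A - B * K) := by
  intro μ hμ
  obtain ⟨v, hv0, hv⟩ := exists_mulVec_eq_smul_of_mem_spectrum hμ
  by_contra! hre
  have hlyapℂ := congrArg (·.map Complex.ofReal) hlyap
  simp only [Matrix.map_add _ Complex.ofReal_add, map_ofReal_mul, transpose_map_ofReal,
    Matrix.map_zero _ Complex.ofReal_zero] at hlyapℂ
  rw [add_assoc] at hlyapℂ
  have hCC := posSemidef_conjTranspose_mul_self (C.map Complex.ofReal)
  have hKRK := hR.map_ofReal.posSemidef.conjTranspose_mul_mul_same (K.map Complex.ofReal)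
  obtain ⟨hCv, hKv⟩ := hCC.mulVec_eq_zero_of_add hKRK
    (mulVec_eq_zero_of_lyapunov hP.map_ofReal (hCC.add hKRK) hlyapℂ hv0 hv hre)
  rw [conjTranspose_mul_self_mulVec_eq_zero] at hCv
  rw [hR.map_ofReal.conjTranspose_mul_mul_same_mulVec_eq_zero] at hKv
  rw [Matrix.map_sub _ Complex.ofReal_sub, map_ofReal_mul, sub_mulVec, ← mulVec_mulVec, hKv,
    mulVec_zero, sub_zero] at hv
  exact hv0 (hobs.eq_zero_of_mulVec_eq_smul hv hCv)

theorem kleinman_hurwitz_general {n m : ℕ}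
    (A : Matrix (Fin n) (Fin n) ℝ) (B : Matrix (Fin n) (Fin m) ℝ)
    (Q sqrtQ : Matrix (Fin n) (Fin n) ℝ) (R : Matrix (Fin m) (Fin m) ℝ)
    (K : ℕ → Matrix (Fin m) (Fin n) ℝ) (P : ℕ → Matrix (Fin n) (Fin n) ℝ)
    (hsqrt : sqrtQᵀ * sqrtQ = Q)
    (hobs : Observable A sqrtQ)
    (hR : R.PosDef)
    (hP : ∀ k, 1 ≤ k → (P k).PosDef ∧
      P k * (A - B * K (k - 1)) + (A - B * K (k - 1))ᵀ * P k
        + Q + (K (k - 1))ᵀ * R * K (k - 1) = 0) :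
    ∀ k, Hurwitz (A - B * K k) := by
  intro k
  obtain ⟨hPpos, hlyap⟩ := hP (k + 1) k.succ_pos
  rw [Nat.add_sub_cancel, ← hsqrt] at hlyap
  exact hurwitz_of_lyapunov hobs hR hPpos hlyap

theorem kleinman_hurwitz {n m : ℕ}
    (A : Matrix (Fin n) (Fin n) ℝ) (B : Matrix (Fin n) (Fin m) ℝ)
    (Q sqrtQ : Matrix (Fin n) (Fin n) ℝ) (R : Matrix (Fin m) (Fin m) ℝ)
    (K : ℕ → Matrix (Fin m) (Fin n) ℝ) (P : ℕ → Matrix (Fin n) (Fin n) ℝ)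
    (hstab : ∃ K₀ : Matrix (Fin m) (Fin n) ℝ, Hurwitz (A - B * K₀))
    (hQ : Q.PosSemidef) (hsqrt : sqrtQᵀ * sqrtQ = Q)
    (hobs : Observable A sqrtQ)
    (hR : R.PosDef)
    (hK0 : Hurwitz (A - B * K 0))
    (hP : ∀ k, 1 ≤ k → (P k).PosDef ∧
      P k * (A - B * K (k - 1)) + (A - B * K (k - 1))ᵀ * P k
        + Q + (K (k - 1))ᵀ * R * K (k - 1) = 0)
    (hK : ∀ k, 1 ≤ k → K k = R⁻¹ * Bᵀ * P (k - 1)) :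
    ∀ k, Hurwitz (A - B * K k) :=
  kleinman_hurwitz_general A B Q sqrtQ R K P hsqrt hobs hR hP
end
end

section
/- If rank([A − λI, B; C, 0]) = n + p for every eigenvalue λ of E, then for any D ∈ ℝ^{n×q} and F ∈ ℝ^{p×q} the regulator equations XE = AX + BU + D and 0 = CX + F admit a solution pair (X, U) with X ∈ ℝ^{n×q}, U ∈ ℝ^{m×q}. -/
open Matrix

noncomputable section

/-!
Put `W = [X; U]`, `G = [A B; C 0]` and `H = [1 0; 0 0]`. The regulator equations say
`G W - H W E = -[D; F]`, so it suffices that the map `W ↦ G W - H W E` is onto. Over `ℂ`, its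
adjoint for the trace pairing is `Y ↦ Y G - E Y H`. If `Y G = E Y H` and `u` is a generalized
left eigenvector of `E` for `μ`, then `(u Y) (G - μ H) = (u (E - μ) Y) H`, which vanishes by
induction on the height of `u`; since `G - μ H` has full row rank, `u Y = 0`. Generalized
eigenvectors span, so `Y = 0` and the complex map is onto. Real parts of a complex solution solve
the real equations.
-/

namespace LinearMap

variable {K V W Z : Type*} [AddCommGroup V] [AddCommGroup W] [AddCommGroup Z]

theorem apply_eq_zero_of_mem_maxGenEigenspace [CommRing K] [Module K V] [Module K W]
    [Module K Z] {f : Module.End K V} {L : V →ₗ[K] W} {P Q : W →ₗ[K] Z}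
    (h : P ∘ₗ L = Q ∘ₗ L ∘ₗ f) {μ : K} (hμ : Function.Injective (P - μ • Q))
    {v : V} (hv : v ∈ f.maxGenEigenspace μ) : L v = 0 := by
  obtain ⟨k, hk⟩ := (f.mem_maxGenEigenspace μ v).mp hv
  clear hv
  induction k generalizing v with
  | zero => simp_all
  | succ k ih =>
    have hL : L ((f - μ • 1) v) = 0 := ih (by rwa [← Module.End.mul_apply, ← pow_succ])
    have hPL : P (L v) = Q (L (f v)) := LinearMap.congr_fun h v
    refine hμ ?_
    calc (P - μ • Q) (L v) = Q (L ((f - μ • 1) v)) := by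
          simp only [sub_apply, smul_apply, map_sub, map_smul, Module.End.one_apply, hPL]
      _ = (P - μ • Q) 0 := by rw [hL, map_zero, map_zero]

theorem eq_zero_of_comp_eq_comp_comp [Field K] [IsAlgClosed K] [Module K V]
    [FiniteDimensional K V] [Module K W] [Module K Z] {f : Module.End K V} {L : V →ₗ[K] W}
    {P Q : W →ₗ[K] Z} (h : P ∘ₗ L = Q ∘ₗ L ∘ₗ f)
    (hPQ : ∀ μ, f.HasEigenvalue μ → Function.Injective (P - μ • Q)) : L = 0 := by
  suffices hker : ∀ μ, f.maxGenEigenspace μ ≤ ker L by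
    rw [← ker_eq_top, eq_top_iff, ← f.iSup_maxGenEigenspace_eq_top]
    exact iSup_le hker
  intro μ v hv
  rw [mem_ker]
  by_cases hv0 : v = 0
  · rw [hv0, map_zero]
  have hgen : f.HasUnifEigenvalue μ ⊤ := (Submodule.ne_bot_iff _).mpr ⟨v, hv, hv0⟩
  exact apply_eq_zero_of_mem_maxGenEigenspace h (hPQ μ (hgen.lt zero_lt_one)) hv

end LinearMap

namespace Matrix

section Duality

variable {K l m n o : Type*} [Fintype m] [Fintype n]

theorem spectrum_transpose [CommRing K] [DecidableEq n] (A : Matrix n n K) :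
    spectrum K Aᵀ = spectrum K A := by
  ext μ
  rw [spectrum.mem_iff, spectrum.mem_iff, ← isUnit_transpose, transpose_sub, transpose_transpose]
  simp [Algebra.algebraMap_eq_smul_one]

theorem vecMul_injective_of_rank_eq_card [Field K] {M : Matrix m n K}
    (h : M.rank = Fintype.card m) : Function.Injective M.vecMul := by
  rw [vecMul_injective_iff, linearIndependent_iff_card_eq_finrank_span, ← h]
  exact rank_eq_finrank_span_row M

theorem exists_trace_mul_eq [CommSemiring K] [DecidableEq m] [DecidableEq n]
    (φ : Module.Dual K (Matrix m n K)) : ∃ Y : Matrix n m K, ∀ M, φ M = trace (Y * M) := by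
  refine ⟨of fun j i => φ (single i j 1), fun M => ?_⟩
  conv_lhs => rw [matrix_eq_sum_single M]
  simp only [map_sum, trace, diag, mul_apply, of_apply]
  rw [Finset.sum_comm]
  refine Finset.sum_congr rfl fun i _ => Finset.sum_congr rfl fun j _ => ?_
  have hM : single j i (M j i) = M j i • single j i (1 : K) := by
    rw [smul_single, smul_eq_mul, mul_one]
  rw [hM, map_smul, smul_eq_mul, mul_comm]

theorem surjective_of_trace_adjoint [Field K] [Fintype l] [Fintype o] [DecidableEq l]
    [DecidableEq o] (T : Matrix m n K →ₗ[K] Matrix l o K) (T' : Matrix o l K → Matrix n m K)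
    (hadj : ∀ Y W, trace (Y * T W) = trace (T' Y * W)) (hT' : ∀ Y, T' Y = 0 → Y = 0) :
    Function.Surjective T := by
  rw [← LinearMap.dualMap_injective_iff, injective_iff_map_eq_zero]
  intro φ hφ
  obtain ⟨Y, hY⟩ := exists_trace_mul_eq φ
  have hY0 : Y = 0 := hT' Y <| ext_iff_trace_mul_right.mpr fun W => by
    rw [← hadj, ← hY, Matrix.zero_mul, trace_zero]
    exact LinearMap.congr_fun hφ W
  ext M
  simp [hY, hY0]

end Duality

section Sylvester

variable {K ι κ σ : Type*} [Fintype κ] [Fintype σ]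

def sylvesterMap [CommRing K] (G H : Matrix ι κ K) (E : Matrix σ σ K) :
    Matrix κ σ K →ₗ[K] Matrix ι σ K where
  toFun W := G * W - H * W * E
  map_add' W₁ W₂ := by simp only [Matrix.mul_add, Matrix.add_mul]; abel
  map_smul' c W := by simp [Matrix.mul_smul, Matrix.smul_mul, smul_sub]

theorem sylvesterMap_apply [CommRing K] (G H : Matrix ι κ K) (E : Matrix σ σ K)
    (W : Matrix κ σ K) : sylvesterMap G H E W = G * W - H * W * E := rfl

theorem trace_mul_sylvesterMap [CommRing K] [Fintype ι] (G H : Matrix ι κ K)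
    (E : Matrix σ σ K) (Y : Matrix σ ι K) (W : Matrix κ σ K) :
    trace (Y * sylvesterMap G H E W) = trace ((Y * G - E * Y * H) * W) := by
  rw [sylvesterMap_apply, Matrix.mul_sub, Matrix.sub_mul, trace_sub, trace_sub,
    ← Matrix.mul_assoc, ← Matrix.mul_assoc, ← Matrix.mul_assoc, trace_mul_comm _ E,
    Matrix.mul_assoc, Matrix.mul_assoc, Matrix.mul_assoc, Matrix.mul_assoc]

theorem sylvesterMap_surjective [Field K] [IsAlgClosed K] [Fintype ι] [DecidableEq ι]
    [DecidableEq σ] {G H : Matrix ι κ K} {E : Matrix σ σ K}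
    (hGH : ∀ μ ∈ spectrum K E, Function.Injective (G - μ • H).vecMul) :
    Function.Surjective (sylvesterMap G H E) := by
  refine surjective_of_trace_adjoint _ (fun Y => Y * G - E * Y * H)
    (trace_mul_sylvesterMap G H E) fun Y hY => ?_
  have hcomm : G.vecMulLinear ∘ₗ Y.vecMulLinear
      = H.vecMulLinear ∘ₗ Y.vecMulLinear ∘ₗ E.vecMulLinear := by
    refine LinearMap.ext fun u => ?_
    simp only [LinearMap.comp_apply, vecMulLinear_apply, vecMul_vecMul, sub_eq_zero.mp hY]
  have hY : Y.vecMulLinear = 0 := by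
    refine LinearMap.eq_zero_of_comp_eq_comp_comp hcomm fun μ hμ => ?_
    have hspec : μ ∈ spectrum K E := by
      rwa [← spectrum_transpose, ← spectrum_toLin',
        ← Module.End.hasEigenvalue_iff_mem_spectrum, toLin'_apply', mulVecLin_transpose]
    convert hGH μ hspec using 1
    ext u : 1
    simp [vecMul_sub, vecMul_smul]
  ext i j
  simpa using congr_fun (LinearMap.congr_fun hY (Pi.single i 1)) j

theorem sylvesterMap_fromBlocks_fromRows {R n m p q : Type*} [CommRing R] [Fintype n]
    [Fintype m] [Fintype q] [DecidableEq n] (A : Matrix n n R) (B : Matrix n m R)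
    (C : Matrix p n R) (E : Matrix q q R) (X : Matrix n q R) (U : Matrix m q R) :
    sylvesterMap (fromBlocks A B C 0) (fromBlocks 1 0 0 (0 : Matrix p m R)) E (fromRows X U) =
      fromRows (A * X + B * U - X * E) (C * X) := by
  rw [sylvesterMap_apply, fromBlocks_mul_fromRows, fromBlocks_mul_fromRows, fromRows_mul]
  ext (i | i) j <;> simp

theorem fromBlocks_sub_smul_fromBlocks_one {R n m p : Type*} [CommRing R] [DecidableEq n]
    (A : Matrix n n R) (B : Matrix n m R) (C : Matrix p n R) (μ : R) :
    fromBlocks A B C 0 - μ • fromBlocks 1 0 0 (0 : Matrix p m R) =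
      fromBlocks (A - μ • 1) B C 0 := by
  rw [fromBlocks_smul, sub_eq_add_neg, fromBlocks_neg, fromBlocks_add]
  simp [sub_eq_add_neg]

end Sylvester

section Complexification

variable {l m n : Type*} [Fintype m]

theorem map_re_map_ofReal_mul (M : Matrix l m ℝ) (Z : Matrix m n ℂ) :
    (M.map Complex.ofReal * Z).map Complex.re = M * Z.map Complex.re := by
  ext; simp [mul_apply, Complex.re_sum]

theorem map_re_mul_map_ofReal (Z : Matrix l m ℂ) (M : Matrix m n ℝ) :
    (Z * M.map Complex.ofReal).map Complex.re = Z.map Complex.re * M := by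
  ext; simp [mul_apply, Complex.re_sum]

variable {ι κ σ : Type*} [Fintype κ] [Fintype σ]

theorem map_re_sylvesterMap (G H : Matrix ι κ ℝ) (E : Matrix σ σ ℝ) (W : Matrix κ σ ℂ) :
    (sylvesterMap (G.map Complex.ofReal) (H.map Complex.ofReal) (E.map Complex.ofReal) W).map
      Complex.re = sylvesterMap G H E (W.map Complex.re) := by
  rw [sylvesterMap_apply, sylvesterMap_apply, ← map_re_map_ofReal_mul, ← map_re_map_ofReal_mul,
    ← map_re_mul_map_ofReal]
  ext; simp

theorem sylvesterMap_surjective_of_map_ofReal {G H : Matrix ι κ ℝ} {E : Matrix σ σ ℝ}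
    (h : Function.Surjective
      (sylvesterMap (G.map Complex.ofReal) (H.map Complex.ofReal) (E.map Complex.ofReal))) :
    Function.Surjective (sylvesterMap G H E) := fun R => by
  obtain ⟨W, hW⟩ := h (R.map Complex.ofReal)
  refine ⟨W.map Complex.re, ?_⟩
  rw [← map_re_sylvesterMap, hW]
  ext; simp

end Complexification

end Matrix

theorem regulator_equations_solvable {n m p q : ℕ}
    (A : Matrix (Fin n) (Fin n) ℝ) (B : Matrix (Fin n) (Fin m) ℝ)
    (C : Matrix (Fin p) (Fin n) ℝ) (E : Matrix (Fin q) (Fin q) ℝ)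
    (hrank : ∀ μ ∈ spectrum ℂ (E.map Complex.ofReal),
      (Matrix.fromBlocks (A.map Complex.ofReal - μ • 1) (B.map Complex.ofReal)
        (C.map Complex.ofReal) 0).rank = n + p) :
    ∀ (D : Matrix (Fin n) (Fin q) ℝ) (F : Matrix (Fin p) (Fin q) ℝ),
      ∃ (X : Matrix (Fin n) (Fin q) ℝ) (U : Matrix (Fin m) (Fin q) ℝ),
        X * E = A * X + B * U + D ∧ (0 : Matrix (Fin p) (Fin q) ℝ) = C * X + F := by
  intro D F
  have hsurj : Function.Surjective (sylvesterMap (fromBlocks A B C 0)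
      (fromBlocks 1 0 0 (0 : Matrix (Fin p) (Fin m) ℝ)) E) := by
    refine sylvesterMap_surjective_of_map_ofReal (sylvesterMap_surjective fun μ hμ => ?_)
    apply vecMul_injective_of_rank_eq_card
    simpa [fromBlocks_map, fromBlocks_sub_smul_fromBlocks_one] using hrank μ hμ
  obtain ⟨W, hW⟩ := hsurj (fromRows (-D) (-F))
  rw [← fromRows_toRows W, sylvesterMap_fromBlocks_fromRows] at hW
  obtain ⟨hX, hC⟩ := fromRows_inj hW
  refine ⟨W.toRows₁, W.toRows₂, ?_, ?_⟩
  · rw [← neg_neg D, ← hX]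
    abel
  · rw [hC, neg_add_cancel]
end
end
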